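/- Let N be even, let g ∈ G[X] be the Raz–Yehudayoff polynomial on X = {x_1,…,x_N}, and let φ : X → Y ∪ Z be any bijection with |Y| = |Z| = N/2. Then the partial derivative matrix of g^φ has full rank over G: rank(M_{g^φ}) = 2^{N/2}. -/

import Mathlib

open MvPolynomial

noncomputable section

/-- A multilinear polynomial: every exponent is at most 1. -/
def MLin {σ : Type*} {K : Type*} [CommSemiring K] (f : MvPolynomial σ K) : Prop :=
  ∀ d ∈ f.support, ∀ i, d i ≤ 1

/-- The partial derivative matrix of a multilinear polynomial over Y ∪ Z
(Y = `inl`-variables, Z = `inr`-variables), rows and columns indexed by subsets. -/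
def pdm {h : ℕ} {K : Type*} [CommSemiring K] (f : MvPolynomial (Fin h ⊕ Fin h) K) :
    Matrix (Finset (Fin h)) (Finset (Fin h)) K := fun S T =>
  f.coeff ((∑ i ∈ S, Finsupp.single (Sum.inl i) 1) + ∑ j ∈ T, Finsupp.single (Sum.inr j) 1)

/-- The field G = F(W), the field of rational functions over F in variables
`w_{i,k,j}`, `i,k,j ∈ ℕ`. -/
abbrev Gf (F : Type*) [Field F] : Type _ := FractionRing (MvPolynomial (ℕ × ℕ × ℕ) F)

/-- The element w_{i,k,j} of G. -/
def wv (F : Type*) [Field F] (i k j : ℕ) : Gf F :=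
  algebraMap (MvPolynomial (ℕ × ℕ × ℕ) F) (Gf F) (MvPolynomial.X (i, k, j))

/-- The Raz–Yehudayoff polynomials `g_{i,j}` (first argument is fuel; every
recursive call reduces `j - i` by at least 2, so fuel `N` suffices for `g_{1,N}`). -/
def RY (F : Type*) [Field F] : ℕ → ℕ → ℕ → MvPolynomial ℕ (Gf F)
  | 0, _, _ => 1
  | fuel + 1, i, j =>
      if j < i then 1
      else (1 + X i * X j) * RY F fuel (i + 1) (j - 1)
        + ∑ k ∈ (Finset.Icc (i + 1) (j - 2)).filter (fun k => (k - i) % 2 = 1),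
            C (wv F i k j) * RY F fuel i k * RY F fuel (k + 1) j

/-- The Raz–Yehudayoff polynomial `g = g_{1,N}`, in the variables `x_1, …, x_N`. -/
def razPoly (F : Type*) [Field F] (N : ℕ) : MvPolynomial ℕ (Gf F) := RY F N 1 N

/-- `|φ(S) ∩ Y|` for a partition function φ. -/
def yCount {h : ℕ} (φ : ℕ → Fin h ⊕ Fin h) (S : Finset ℕ) : ℕ :=
  (S.filter fun x => (φ x).isLeft = true).card

/-- `|φ(S) ∩ Z|` for a partition function φ. -/
def zCount {h : ℕ} (φ : ℕ → Fin h ⊕ Fin h) (S : Finset ℕ) : ℕ :=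
  (S.filter fun x => (φ x).isRight = true).card

/-- `S` is `k`-unbalanced with respect to the partition φ. -/
def kUnb {h : ℕ} (φ : ℕ → Fin h ⊕ Fin h) (k : ℕ) (S : Finset ℕ) : Prop :=
  (k : ℤ) ≤ |(yCount φ S : ℤ) - (zCount φ S : ℤ)|

/-- Extension of a partition given on `X` to all of ℕ (junk value elsewhere). -/
def extPart {h : ℕ} (hh : 0 < h) (X : Finset ℕ) (e : {x // x ∈ X} → Fin h ⊕ Fin h) :
    ℕ → Fin h ⊕ Fin h := fun x =>
  if hx : x ∈ X then e ⟨x, hx⟩ else Sum.inl ⟨0, hh⟩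

/-- Probability of an event under the uniform distribution on a finite type. -/
def unifProb {Ω : Type*} [Fintype Ω] (p : Ω → Prop) : ℝ :=
  haveI := Classical.decPred p
  ((Finset.univ.filter p).card : ℝ) / (Fintype.card Ω : ℝ)

/-- The (1,1) entry of the product `M 0 * M 1 * ⋯ * M (n-1)`. -/
def mprodVal {K : Type*} [CommSemiring K] {n w : ℕ} (hw : 0 < w)
    (M : Fin n → Matrix (Fin w) (Fin w) (MvPolynomial ℕ K)) : MvPolynomial ℕ K :=
  (List.ofFn M).prod ⟨0, hw⟩ ⟨0, hw⟩

/-- An oblivious read-once ABP of width `w` in variables `x_1, …, x_N` with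
variable order π (a permutation of `{1, …, N}`): the ℓ-th layer matrix has
entries of degree at most 1 in the single variable `x_{π(ℓ)}`. -/
def IsROABP {K : Type*} [CommSemiring K] (N w : ℕ) (π : ℕ → ℕ)
    (M : Fin N → Matrix (Fin w) (Fin w) (MvPolynomial ℕ K)) : Prop :=
  Set.BijOn π (Set.Icc 1 N) (Set.Icc 1 N) ∧
    ∀ ℓ : Fin N, ∀ i j, ∃ a b : K, M ℓ i j = C a + C b * X (π (ℓ.val + 1))

/-- An `r`-pass syntactically multilinear ABP of width `w`. -/
def IsRPass {K : Type*} [CommSemiring K] (N w r : ℕ) (π : Fin r → ℕ → ℕ)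
    (M : Fin (r * N) → Matrix (Fin w) (Fin w) (MvPolynomial ℕ K)) : Prop :=
  (∀ j, Set.BijOn (π j) (Set.Icc 1 N) (Set.Icc 1 N)) ∧
  (∀ ℓ : Fin (r * N), ∀ i j, ∃ a b : K,
      M ℓ i j = C a + C b *
        X (π ⟨ℓ.val / N, Nat.div_lt_of_lt_mul (by rw [Nat.mul_comm N r]; exact ℓ.2)⟩
            (ℓ.val % N + 1))) ∧
  (∀ (idx : Fin (r * N + 1) → Fin w) (v : ℕ) (ℓ₁ ℓ₂ : Fin (r * N)),
      v ∈ (M ℓ₁ (idx ℓ₁.castSucc) (idx ℓ₁.succ)).vars →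
      v ∈ (M ℓ₂ (idx ℓ₂.castSucc) (idx ℓ₂.succ)).vars → ℓ₁ = ℓ₂)

/-- An α-sparse ROABP with variable blocks `Xs 0, …, Xs (d-1)`, width `w` and
sparsity `t`: every entry of the `i`-th matrix is a multilinear polynomial in the
variables `Xs i` with at most `t` monomials. -/
def IsSparseROABP {K : Type*} [CommSemiring K] {d : ℕ} (w t : ℕ)
    (Xs : Fin d → Finset ℕ) (M : Fin d → Matrix (Fin w) (Fin w) (MvPolynomial ℕ K)) : Prop :=
  ∀ ℓ i j, MLin (M ℓ i j) ∧ (M ℓ i j).vars ⊆ Xs ℓ ∧ (M ℓ i j).support.card ≤ t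

/-!
Over the polynomial ring `D[w]` in the weights, induction on intervals shows: if `φ` is
injective on `[i, j]` (of even length), the partial derivative matrix of `g_{i,j}^φ` has a
nonsingular minor of size `2 ^ min (#Y, #Z)`, where `Y` and `Z` count the variables of `[i, j]` sent
to either side. The minor stays nonsingular in `G = Frac D[w]`, and for `[1, N]` both counts are
`N / 2`. A minor is nonsingular as soon as it is after some specialization of the weights, and the
induction step specializes the outer weights `w_{i,·,j}`:
* if `x_i` and `x_j` go to different sides, killing them leaves `(1 + x_i x_j) g_{i+1,j-1}`. For
  factors in disjoint variables, Kronecker products of nonsingular minors of the factors are minors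
  of the product, and `1 + y z` has a `2 × 2` identity minor;
* if they go to the same side, the imbalance `#Y - #Z` of the prefixes `[i, l]` moves by one at each
  step, so some split `k` makes the minima add up. Sending `w_{i,k,j}` to a new variable `t` and the
  other `w_{i,·,j}` to `0` gives `A + t B` with `B = g_{i,k} g_{k+1,j}`, and the top coefficient in
  `t` of the minor's determinant is the corresponding minor of `B`.
-/

namespace Matrix

open scoped Kronecker

variable {m n R : Type*} [CommRing R]

def HasNonsingularMinor (M : Matrix m n R) (s : ℕ) : Prop :=
  ∃ (r : Fin s → m) (c : Fin s → n), (M.submatrix r c).det ≠ 0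

theorem hasNonsingularMinor_card_of_det_ne_zero [Fintype m] [DecidableEq m] {M : Matrix m m R}
    (hM : M.det ≠ 0) : M.HasNonsingularMinor (Fintype.card m) := by
  refine ⟨(Fintype.equivFin m).symm, (Fintype.equivFin m).symm, ?_⟩
  rwa [det_submatrix_equiv_self]

theorem hasNonsingularMinor_one_of_ne_zero {M : Matrix m n R} {i : m} {j : n} (hij : M i j ≠ 0) :
    M.HasNonsingularMinor 1 :=
  ⟨fun _ => i, fun _ => j, by simpa [det_unique] using hij⟩

namespace HasNonsingularMinor

variable {M : Matrix m n R} {s : ℕ}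

theorem of_submatrix {m' n' : Type*} {r : m' → m} {c : n' → n}
    (h : (M.submatrix r c).HasNonsingularMinor s) : M.HasNonsingularMinor s := by
  obtain ⟨r', c', hd⟩ := h
  exact ⟨r ∘ r', c ∘ c', hd⟩

theorem of_map {S : Type*} [CommRing S] {ψ : R →+* S} (h : (M.map ψ).HasNonsingularMinor s) :
    M.HasNonsingularMinor s := by
  obtain ⟨r, c, hd⟩ := h
  refine ⟨r, c, fun h0 => hd ?_⟩
  rw [submatrix_map, ← RingHom.mapMatrix_apply, ← RingHom.map_det, h0, map_zero]

theorem map {S : Type*} [CommRing S] {ψ : R →+* S} (hψ : Function.Injective ψ)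
    (h : M.HasNonsingularMinor s) : (M.map ψ).HasNonsingularMinor s := by
  obtain ⟨r, c, hd⟩ := h
  refine ⟨r, c, ?_⟩
  rw [submatrix_map, ← RingHom.mapMatrix_apply, ← RingHom.map_det]
  exact (map_ne_zero_iff ψ hψ).mpr hd

theorem le_rank {K : Type*} [Field K] [Fintype n] {M : Matrix m n K}
    (h : M.HasNonsingularMinor s) : s ≤ M.rank := by
  obtain ⟨r, c, hd⟩ := h
  calc s = (M.submatrix r c).rank := by
        rw [rank_of_isUnit _ ((isUnit_iff_isUnit_det _).mpr (isUnit_iff_ne_zero.mpr hd)),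
          Fintype.card_fin]
    _ ≤ M.rank := rank_submatrix_le M r c

theorem kronecker [IsDomain R] {m' n' : Type*} {M' : Matrix m' n' R} {t : ℕ}
    (h : M.HasNonsingularMinor s) (h' : M'.HasNonsingularMinor t) :
    (M ⊗ₖ M').HasNonsingularMinor (s * t) := by
  obtain ⟨r, c, hd⟩ := h
  obtain ⟨r', c', hd'⟩ := h'
  refine of_submatrix (M := M ⊗ₖ M') (r := Prod.map r r') (c := Prod.map c c') ?_
  rw [← kroneckerMap_submatrix_submatrix]
  simpa using hasNonsingularMinor_card_of_det_ne_zero (M := M.submatrix r c ⊗ₖ M'.submatrix r' c')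
    (by rw [det_kronecker]; exact mul_ne_zero (pow_ne_zero _ hd) (pow_ne_zero _ hd'))

open Polynomial in
theorem X_smul_map_C_add (h : M.HasNonsingularMinor s) (A : Matrix m n R) :
    ((X : R[X]) • M.map Polynomial.C + A.map Polynomial.C).HasNonsingularMinor s := by
  obtain ⟨r, c, hd⟩ := h
  refine ⟨r, c, fun h0 => hd ?_⟩
  have hsub : ((X : R[X]) • M.map Polynomial.C + A.map Polynomial.C).submatrix r c =
      (X : R[X]) • (M.submatrix r c).map Polynomial.C + (A.submatrix r c).map Polynomial.C := rfl
  have hlead := coeff_det_X_add_C_card (M.submatrix r c) (A.submatrix r c)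
  rwa [← hsub, h0, Polynomial.coeff_zero, eq_comm] at hlead

end HasNonsingularMinor

end Matrix

namespace MvPolynomial

theorem coeff_add_mul_of_disjoint_vars {σ R : Type*} [CommSemiring R] {p q : MvPolynomial σ R}
    (hpq : Disjoint p.vars q.vars) {d₁ d₂ : σ →₀ ℕ} (h₁ : d₁.support ⊆ p.vars)
    (h₂ : d₂.support ⊆ q.vars) : coeff (d₁ + d₂) (p * q) = coeff d₁ p * coeff d₂ q := by
  classical
  have hfilter : ∀ {u v : σ →₀ ℕ}, u.support ⊆ p.vars → v.support ⊆ q.vars →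
      (u + v).filter (· ∈ p.vars) = u := by
    intro u v hu hv
    rw [Finsupp.filter_add,
      (Finsupp.filter_eq_self_iff _ _).mpr fun x hx => hu (Finsupp.mem_support_iff.mpr hx),
      (Finsupp.filter_eq_zero_iff _ _).mpr fun x hx => Finsupp.notMem_support_iff.mp
        fun hxv => Finset.disjoint_left.mp hpq hx (hv hxv), add_zero]
  rw [coeff_mul,
    Finset.sum_eq_single_of_mem (d₁, d₂) (Finset.HasAntidiagonal.mem_antidiagonal.mpr rfl)]
  rintro ⟨u, v⟩ huv hne
  rw [Finset.HasAntidiagonal.mem_antidiagonal] at huv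
  by_contra h0
  have hu : u.support ⊆ p.vars := fun x hx =>
    (mem_vars_iff_mem_support x).mpr ⟨u, mem_support_iff.mpr (left_ne_zero_of_mul h0), hx⟩
  have hv : v.support ⊆ q.vars := fun x hx =>
    (mem_vars_iff_mem_support x).mpr ⟨v, mem_support_iff.mpr (right_ne_zero_of_mul h0), hx⟩
  have hud : u = d₁ := by rw [← hfilter hu hv, huv, hfilter h₁ h₂]
  subst hud
  exact hne (Prod.ext rfl (add_left_cancel huv))

theorem disjoint_vars_rename {σ τ R : Type*} [CommSemiring R] [DecidableEq τ] {f : σ → τ}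
    {p q : MvPolynomial σ R} {s t : Set σ} (hp : p ∈ supported R s) (hq : q ∈ supported R t)
    (hst : Disjoint s t) (hf : Set.InjOn f (s ∪ t)) :
    Disjoint (rename f p).vars (rename f q).vars := by
  have himage : ∀ {r : MvPolynomial σ R} {u : Set σ}, r ∈ supported R u →
      ((rename f r).vars : Set τ) ⊆ f '' u := fun hr =>
    (Finset.coe_subset.mpr (vars_rename f _)).trans
      ((Finset.coe_image).trans_subset (Set.image_mono (mem_supported.mp hr)))
  rw [← Finset.disjoint_coe]
  exact (hst.image hf Set.subset_union_left Set.subset_union_right).mono (himage hp) (himage hq)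

end MvPolynomial

theorem exists_eq_zero_of_abs_sub_le_one (c : ℕ → ℤ) {a b : ℕ} (hab : a ≤ b)
    (hstep : ∀ n, a ≤ n → n < b → |c (n + 1) - c n| ≤ 1) (ha : 0 ≤ c a) (hb : c b ≤ 0) :
    ∃ n, a ≤ n ∧ n ≤ b ∧ c n = 0 := by
  induction b, hab using Nat.le_induction with
  | base => exact ⟨a, le_rfl, le_rfl, le_antisymm hb ha⟩
  | succ b hab ih =>
    by_cases hcb : c b ≤ 0
    · obtain ⟨n, han, hnb, hn⟩ := ih (fun n h₁ h₂ => hstep n h₁ (by omega)) hcb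
      exact ⟨n, han, by omega, hn⟩
    · have := abs_le.mp (hstep b hab (by omega))
      exact ⟨b + 1, by omega, le_rfl, by omega⟩

theorem Nat.Icc_union_Icc_add_one {i k j : ℕ} (hik : i ≤ k + 1) (hkj : k ≤ j) :
    Finset.Icc i k ∪ Finset.Icc (k + 1) j = Finset.Icc i j := by
  ext x
  simp only [Finset.mem_union, Finset.mem_Icc]
  omega

theorem Nat.disjoint_Icc_Icc_add_one (i k j : ℕ) :
    Disjoint (Finset.Icc i k) (Finset.Icc (k + 1) j) :=
  Finset.disjoint_left.mpr fun x hx hx' => by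
    simp only [Finset.mem_Icc] at hx hx'
    omega

section PartialDerivativeMatrix

variable {h : ℕ}

def yzExponent (S T : Finset (Fin h)) : (Fin h ⊕ Fin h) →₀ ℕ :=
  (∑ i ∈ S, Finsupp.single (Sum.inl i) 1) + ∑ j ∈ T, Finsupp.single (Sum.inr j) 1

theorem pdm_apply {K : Type*} [CommSemiring K] (f : MvPolynomial (Fin h ⊕ Fin h) K)
    (S T : Finset (Fin h)) : pdm f S T = f.coeff (yzExponent S T) := rfl

theorem support_yzExponent (S T : Finset (Fin h)) : (yzExponent S T).support = S.disjSum T := by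
  ext (a | b) <;> simp [yzExponent, Finsupp.single_apply]

theorem yzExponent_inj {S T S' T' : Finset (Fin h)} :
    yzExponent S T = yzExponent S' T' ↔ S = S' ∧ T = T' := by
  refine ⟨fun hST => ?_, fun hST => by rw [hST.1, hST.2]⟩
  have hsupp := congrArg Finsupp.support hST
  rw [support_yzExponent, support_yzExponent, Finset.disjSum_eq_iff] at hsupp
  simpa using hsupp

theorem yzExponent_union {S₁ T₁ S₂ T₂ : Finset (Fin h)} (hS : Disjoint S₁ S₂)
    (hT : Disjoint T₁ T₂) :
    yzExponent (S₁ ∪ S₂) (T₁ ∪ T₂) = yzExponent S₁ T₁ + yzExponent S₂ T₂ := by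
  simp only [yzExponent, Finset.sum_union hS, Finset.sum_union hT]
  abel

variable {K : Type*}

theorem pdm_empty_empty [CommSemiring K] (f : MvPolynomial (Fin h ⊕ Fin h) K) :
    pdm f ∅ ∅ = constantCoeff f := by
  simp [pdm_apply, yzExponent, constantCoeff_eq]

theorem pdm_add [CommSemiring K] (f g : MvPolynomial (Fin h ⊕ Fin h) K) :
    pdm (f + g) = pdm f + pdm g := by
  ext S T
  simp [pdm_apply]

theorem pdm_C_mul [CommSemiring K] (a : K) (f : MvPolynomial (Fin h ⊕ Fin h) K) :
    pdm (C a * f) = a • pdm f := by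
  ext S T
  simp [pdm_apply, coeff_C_mul]

theorem pdm_map [CommSemiring K] {L : Type*} [CommSemiring L] (ψ : K →+* L)
    (f : MvPolynomial (Fin h ⊕ Fin h) K) : pdm (map ψ f) = (pdm f).map ψ := by
  ext S T
  simp [pdm_apply, coeff_map]

theorem disjSum_subset_vars_of_pdm_ne_zero [CommSemiring K] {f : MvPolynomial (Fin h ⊕ Fin h) K}
    {S T : Finset (Fin h)} (hf : pdm f S T ≠ 0) : S.disjSum T ⊆ f.vars := by
  intro x hx
  rw [← support_yzExponent] at hx
  exact (mem_vars_iff_mem_support x).mpr ⟨_, mem_support_iff.mpr hf, hx⟩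

theorem pdm_mul_union [CommSemiring K] {f g : MvPolynomial (Fin h ⊕ Fin h) K}
    (hfg : Disjoint f.vars g.vars) {S₁ T₁ S₂ T₂ : Finset (Fin h)}
    (h₁ : S₁.disjSum T₁ ⊆ f.vars) (h₂ : S₂.disjSum T₂ ⊆ g.vars) :
    pdm (f * g) (S₁ ∪ S₂) (T₁ ∪ T₂) = pdm f S₁ T₁ * pdm g S₂ T₂ := by
  have hST := Finset.disjoint_of_subset_left h₁ (Finset.disjoint_of_subset_right h₂ hfg)
  have hS : Disjoint S₁ S₂ := Finset.disjoint_left.mpr fun a ha₁ ha₂ =>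
    Finset.disjoint_left.mp hST (Finset.inl_mem_disjSum.mpr ha₁) (Finset.inl_mem_disjSum.mpr ha₂)
  have hT : Disjoint T₁ T₂ := Finset.disjoint_left.mpr fun b hb₁ hb₂ =>
    Finset.disjoint_left.mp hST (Finset.inr_mem_disjSum.mpr hb₁) (Finset.inr_mem_disjSum.mpr hb₂)
  rw [pdm_apply, yzExponent_union hS hT]
  exact MvPolynomial.coeff_add_mul_of_disjoint_vars hfg
    (support_yzExponent S₁ T₁ ▸ h₁) (support_yzExponent S₂ T₂ ▸ h₂)

theorem Matrix.HasNonsingularMinor.exists_pdm_subset_vars [CommRing K]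
    {f : MvPolynomial (Fin h ⊕ Fin h) K} {s : ℕ} (hf : (pdm f).HasNonsingularMinor s) :
    ∃ r c : Fin s → Finset (Fin h),
      ((pdm f).submatrix r c).det ≠ 0 ∧ ∀ a b, (r a).disjSum (c b) ⊆ f.vars := by
  obtain ⟨r, c, hd⟩ := hf
  refine ⟨r, c, hd, fun a b => Finset.disjSum_subset.mpr ⟨?_, ?_⟩⟩
  · obtain ⟨b', hb'⟩ : ∃ b', pdm f (r a) (c b') ≠ 0 := by
      by_contra! h0
      exact hd (Matrix.det_eq_zero_of_row_eq_zero a h0)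
    exact (Finset.disjSum_subset.mp (disjSum_subset_vars_of_pdm_ne_zero hb')).1
  · obtain ⟨a', ha'⟩ : ∃ a', pdm f (r a') (c b) ≠ 0 := by
      by_contra! h0
      exact hd (Matrix.det_eq_zero_of_column_eq_zero b h0)
    exact (Finset.disjSum_subset.mp (disjSum_subset_vars_of_pdm_ne_zero ha')).2

open scoped Kronecker in
theorem hasNonsingularMinor_pdm_mul [CommRing K] [IsDomain K]
    {f g : MvPolynomial (Fin h ⊕ Fin h) K} (hfg : Disjoint f.vars g.vars) {s t : ℕ}
    (hf : (pdm f).HasNonsingularMinor s) (hg : (pdm g).HasNonsingularMinor t) :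
    (pdm (f * g)).HasNonsingularMinor (s * t) := by
  obtain ⟨r, c, hd, hrc⟩ := hf.exists_pdm_subset_vars
  obtain ⟨r', c', hd', hrc'⟩ := hg.exists_pdm_subset_vars
  have hkron : (pdm (f * g)).submatrix (fun p => r p.1 ∪ r' p.2) (fun p => c p.1 ∪ c' p.2) =
      (pdm f).submatrix r c ⊗ₖ (pdm g).submatrix r' c' := by
    ext ⟨a, a'⟩ ⟨b, b'⟩
    exact pdm_mul_union hfg (hrc a b) (hrc' a' b')
  refine Matrix.HasNonsingularMinor.of_submatrix (r := fun p : Fin s × Fin t => r p.1 ∪ r' p.2)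
    (c := fun p : Fin s × Fin t => c p.1 ∪ c' p.2) ?_
  rw [hkron]
  simpa using (Matrix.hasNonsingularMinor_card_of_det_ne_zero hd).kronecker
    (Matrix.hasNonsingularMinor_card_of_det_ne_zero hd')

theorem hasNonsingularMinor_pdm_one_add_X_mul_X [CommRing K] [Nontrivial K] (a b : Fin h) :
    (pdm (1 + X (Sum.inl a) * X (Sum.inr b) : MvPolynomial (Fin h ⊕ Fin h) K)).HasNonsingularMinor
      2 := by
  have hpoly : (1 + X (Sum.inl a) * X (Sum.inr b) : MvPolynomial (Fin h ⊕ Fin h) K) =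
      monomial (yzExponent ∅ ∅) 1 + monomial (yzExponent {a} {b}) 1 := by
    simp [yzExponent, X, monomial_mul]
  refine ⟨![∅, {a}], ![∅, {b}], ?_⟩
  rw [Matrix.det_fin_two]
  simp [pdm_apply, hpoly, coeff_monomial, yzExponent_inj]

theorem hasNonsingularMinor_one_of_constantCoeff [CommRing K]
    {f : MvPolynomial (Fin h ⊕ Fin h) K} (hf : constantCoeff f ≠ 0) :
    (pdm f).HasNonsingularMinor 1 :=
  Matrix.hasNonsingularMinor_one_of_ne_zero (i := ∅) (j := ∅) (by rwa [pdm_empty_empty])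

end PartialDerivativeMatrix

section Counting

variable {h : ℕ} (φ : ℕ → Fin h ⊕ Fin h)

theorem yCount_union {s t : Finset ℕ} (hst : Disjoint s t) :
    yCount φ (s ∪ t) = yCount φ s + yCount φ t := by
  rw [yCount, Finset.filter_union,
    Finset.card_union_of_disjoint (Finset.disjoint_filter_filter hst)]
  rfl

theorem zCount_union {s t : Finset ℕ} (hst : Disjoint s t) :
    zCount φ (s ∪ t) = zCount φ s + zCount φ t := by
  rw [zCount, Finset.filter_union,
    Finset.card_union_of_disjoint (Finset.disjoint_filter_filter hst)]
  rfl

theorem yCount_add_zCount (s : Finset ℕ) : yCount φ s + zCount φ s = s.card := by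
  have hz : zCount φ s = (s.filter fun x => ¬(φ x).isLeft = true).card :=
    congrArg Finset.card (Finset.filter_congr fun x _ => by cases φ x <;> simp)
  rw [yCount, hz, Finset.card_filter_add_card_filter_not]

theorem yCount_Icc_eq_add (i k l : ℕ) (hik : i ≤ k + 1) (hkl : k ≤ l) :
    yCount φ (Finset.Icc i l) = yCount φ (Finset.Icc i k) + yCount φ (Finset.Icc (k + 1) l) := by
  rw [← Nat.Icc_union_Icc_add_one hik hkl, yCount_union φ (Nat.disjoint_Icc_Icc_add_one i k l)]

theorem zCount_Icc_eq_add (i k l : ℕ) (hik : i ≤ k + 1) (hkl : k ≤ l) :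
    zCount φ (Finset.Icc i l) = zCount φ (Finset.Icc i k) + zCount φ (Finset.Icc (k + 1) l) := by
  rw [← Nat.Icc_union_Icc_add_one hik hkl, zCount_union φ (Nat.disjoint_Icc_Icc_add_one i k l)]

theorem yCount_add_zCount_Icc (k l : ℕ) :
    yCount φ (Finset.Icc k l) + zCount φ (Finset.Icc k l) = l + 1 - k := by
  rw [yCount_add_zCount, Nat.card_Icc]

theorem yCount_swap (s : Finset ℕ) : yCount (Sum.swap ∘ φ) s = zCount φ s := by
  simp [yCount, zCount]

theorem zCount_swap (s : Finset ℕ) : zCount (Sum.swap ∘ φ) s = yCount φ s := by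
  simp [yCount, zCount]

theorem one_le_yCount {s : Finset ℕ} {x : ℕ} (hx : x ∈ s) (hφx : (φ x).isLeft) :
    1 ≤ yCount φ s :=
  Finset.card_pos.mpr ⟨x, Finset.mem_filter.mpr ⟨hx, hφx⟩⟩

theorem le_yCount_of_surjOn {s : Finset ℕ} (hφ : Set.SurjOn φ s Set.univ) : h ≤ yCount φ s := by
  calc h = (Finset.univ.map Function.Embedding.inl : Finset (Fin h ⊕ Fin h)).card := by simp
    _ ≤ yCount φ s := Finset.card_le_card_of_surjOn φ fun y hy => by
      obtain ⟨a, -, rfl⟩ := Finset.mem_map.mp hy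
      obtain ⟨x, hx, hφx⟩ := hφ (Set.mem_univ (Sum.inl a))
      exact ⟨x, Finset.mem_filter.mpr ⟨hx, by simp [hφx]⟩, hφx⟩

theorem le_zCount_of_surjOn {s : Finset ℕ} (hφ : Set.SurjOn φ s Set.univ) : h ≤ zCount φ s := by
  rw [← yCount_swap]
  exact le_yCount_of_surjOn _ ((Equiv.sumComm (Fin h) (Fin h)).surjective.surjOn.comp hφ)

end Counting

namespace RazYehudayoff

section Poly

variable {R : Type*} [CommSemiring R]

def ryPoly (w : ℕ → ℕ → ℕ → R) : ℕ → ℕ → ℕ → MvPolynomial ℕ R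
  | 0, _, _ => 1
  | fuel + 1, i, j =>
      if j < i then 1
      else (1 + X i * X j) * ryPoly w fuel (i + 1) (j - 1)
        + ∑ k ∈ (Finset.Icc (i + 1) (j - 2)).filter (fun k => (k - i) % 2 = 1),
            C (w i k j) * ryPoly w fuel i k * ryPoly w fuel (k + 1) j

variable (w : ℕ → ℕ → ℕ → R)

theorem ryPoly_of_lt {fuel i j : ℕ} (hij : j < i) : ryPoly w fuel i j = 1 := by
  cases fuel <;> simp [ryPoly, hij]

theorem ryPoly_succ {fuel i j : ℕ} (hij : i ≤ j) :
    ryPoly w (fuel + 1) i j = (1 + X i * X j) * ryPoly w fuel (i + 1) (j - 1)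
      + ∑ k ∈ (Finset.Icc (i + 1) (j - 2)).filter (fun k => (k - i) % 2 = 1),
          C (w i k j) * ryPoly w fuel i k * ryPoly w fuel (k + 1) j := by
  rw [ryPoly, if_neg (not_lt.mpr hij)]

theorem ryPoly_succ_self (fuel i : ℕ) : ryPoly w (fuel + 1) i (i + 1) = 1 + X i * X (i + 1) := by
  rw [ryPoly_succ w (Nat.le_succ i), ryPoly_of_lt w (by omega),
    Finset.Icc_eq_empty (by omega)]
  simp

theorem map_ryPoly {S : Type*} [CommSemiring S] (ψ : R →+* S) (fuel i j : ℕ) :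
    map ψ (ryPoly w fuel i j) = ryPoly (fun a b c => ψ (w a b c)) fuel i j := by
  induction fuel generalizing i j with
  | zero => simp [ryPoly]
  | succ fuel ih =>
    by_cases hij : j < i
    · simp [ryPoly_of_lt _ hij]
    · simp [ryPoly_succ _ (not_lt.mp hij), ih]

theorem ryPoly_congr {w' : ℕ → ℕ → ℕ → R} {fuel i j : ℕ}
    (hw : ∀ a b c, i ≤ a → c ≤ j → w a b c = w' a b c) :
    ryPoly w fuel i j = ryPoly w' fuel i j := by
  induction fuel generalizing i j with
  | zero => rfl
  | succ fuel ih =>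
    by_cases hij : j < i
    · simp [ryPoly_of_lt _ hij]
    rw [ryPoly_succ _ (not_lt.mp hij), ryPoly_succ _ (not_lt.mp hij),
      ih fun a b c ha hc => hw a b c (by omega) (by omega)]
    refine congrArg _ (Finset.sum_congr rfl fun k hk => ?_)
    rw [Finset.mem_filter, Finset.mem_Icc] at hk
    rw [hw i k j le_rfl le_rfl, ih fun a b c ha hc => hw a b c ha (by omega),
      ih fun a b c ha hc => hw a b c (by omega) hc]

theorem ryPoly_mem_supported (fuel i j : ℕ) : ryPoly w fuel i j ∈ supported R (Set.Icc i j) := by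
  induction fuel generalizing i j with
  | zero => exact Subalgebra.one_mem _
  | succ fuel ih =>
    by_cases hij : j < i
    · rw [ryPoly_of_lt _ hij]
      exact Subalgebra.one_mem _
    have hX : ∀ x ∈ Set.Icc i j, (X x : MvPolynomial ℕ R) ∈ supported R (Set.Icc i j) :=
      fun x hx => Algebra.subset_adjoin ⟨x, hx, rfl⟩
    have hsub : ∀ {i' j'}, i ≤ i' → j' ≤ j →
        ryPoly w fuel i' j' ∈ supported R (Set.Icc i j) := fun hi hj =>
      supported_mono (Set.Icc_subset_Icc hi hj) (ih _ _)
    rw [ryPoly_succ _ (not_lt.mp hij)]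
    refine add_mem (mul_mem (add_mem (one_mem _) (mul_mem (hX i ?_) (hX j ?_))) (hsub ?_ ?_))
      (sum_mem fun k hk => mul_mem (mul_mem (Subalgebra.algebraMap_mem _ _) (hsub ?_ ?_))
        (hsub ?_ ?_))
    all_goals simp only [Finset.mem_filter, Finset.mem_Icc, Set.mem_Icc] at *
    all_goals omega

end Poly

theorem RY_eq_ryPoly (F : Type*) [Field F] (fuel i j : ℕ) :
    RY F fuel i j = ryPoly (wv F) fuel i j := by
  induction fuel generalizing i j with
  | zero => rfl
  | succ fuel ih => simp [RY, ryPoly, ih]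

section Splits

variable {h : ℕ} (φ : ℕ → Fin h ⊕ Fin h)

theorem min_count_Icc_of_isLeft_ne {i j : ℕ} (hij : i < j) (hside : (φ i).isLeft ≠ (φ j).isLeft) :
    min (yCount φ (Finset.Icc i j)) (zCount φ (Finset.Icc i j)) =
      min (yCount φ (Finset.Icc (i + 1) (j - 1))) (zCount φ (Finset.Icc (i + 1) (j - 1))) + 1 := by
  have hIcc : Finset.Icc i j = {i, j} ∪ Finset.Icc (i + 1) (j - 1) := by
    ext x
    simp only [Finset.mem_union, Finset.mem_insert, Finset.mem_singleton, Finset.mem_Icc]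
    omega
  have hdisj : Disjoint ({i, j} : Finset ℕ) (Finset.Icc (i + 1) (j - 1)) := by
    simp only [Finset.disjoint_insert_left, Finset.disjoint_singleton_left, Finset.mem_Icc]
    omega
  have hends : yCount φ {i, j} = 1 ∧ zCount φ {i, j} = 1 := by
    rcases hφi : φ i with a | b <;> rcases hφj : φ j with a' | b' <;>
      simp_all [yCount, zCount, Finset.filter_insert, Finset.filter_singleton]
  rw [hIcc, yCount_union φ hdisj, zCount_union φ hdisj, hends.1, hends.2]
  omega

theorem min_count_Icc_succ_self {i : ℕ} (hside : (φ i).isLeft = (φ (i + 1)).isLeft) :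
    min (yCount φ (Finset.Icc i (i + 1))) (zCount φ (Finset.Icc i (i + 1))) = 0 := by
  rw [show Finset.Icc i (i + 1) = {i, i + 1} by
    ext x
    simp only [Finset.mem_Icc, Finset.mem_insert, Finset.mem_singleton]
    omega]
  rcases hφi : φ i with a | b <;> rcases hφj : φ (i + 1) with a' | b' <;>
    simp_all [yCount, zCount, Finset.filter_insert]

theorem exists_split_of_isLeft {i j : ℕ} (hlen : i + 3 ≤ j) (heven : Even (j + 1 - i))
    (hi : (φ i).isLeft) (hj : (φ j).isLeft) :
    ∃ k, i + 1 ≤ k ∧ k + 2 ≤ j ∧ (k - i) % 2 = 1 ∧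
      min (yCount φ (Finset.Icc i k)) (zCount φ (Finset.Icc i k)) +
        min (yCount φ (Finset.Icc (k + 1) j)) (zCount φ (Finset.Icc (k + 1) j)) =
      min (yCount φ (Finset.Icc i j)) (zCount φ (Finset.Icc i j)) := by
  have hfirst := yCount_add_zCount_Icc φ i (i + 1)
  have hfirst_y : 1 ≤ yCount φ (Finset.Icc i (i + 1)) := one_le_yCount φ (by simp) hi
  have hlast_y := yCount_Icc_eq_add φ i (j - 2) j (by omega) (by omega)
  have hlast_z := zCount_Icc_eq_add φ i (j - 2) j (by omega) (by omega)
  have hlast_one : 1 ≤ yCount φ (Finset.Icc (j - 2 + 1) j) :=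
    one_le_yCount φ (by simp only [Finset.mem_Icc]; omega) hj
  have hlast_card := yCount_add_zCount_Icc φ (j - 2 + 1) j
  have htotal := yCount_add_zCount_Icc φ i j
  obtain ⟨m, hm⟩ := heven
  by_cases hk : (yCount φ (Finset.Icc i (i + 1)) : ℤ) - zCount φ (Finset.Icc i (i + 1)) ≤
      (yCount φ (Finset.Icc i j) : ℤ) - zCount φ (Finset.Icc i j)
  · have := yCount_Icc_eq_add φ i (i + 1) j (by omega) (by omega)
    have := zCount_Icc_eq_add φ i (i + 1) j (by omega) (by omega)
    exact ⟨i + 1, le_rfl, hlen, by omega, by omega⟩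
  -- otherwise the imbalance of the prefix `[i, l]` changes sign between `i + 1` and `j - 2`
  have hstep : ∀ n, i + 1 ≤ n → n < j - 2 →
      |((yCount φ (Finset.Icc i (n + 1)) : ℤ) - zCount φ (Finset.Icc i (n + 1))) -
        ((yCount φ (Finset.Icc i n) : ℤ) - zCount φ (Finset.Icc i n))| ≤ 1 := by
    intro n hn _
    have := yCount_Icc_eq_add φ i n (n + 1) (by omega) (by omega)
    have := zCount_Icc_eq_add φ i n (n + 1) (by omega) (by omega)
    have := yCount_add_zCount_Icc φ (n + 1) (n + 1)
    rw [abs_le]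
    omega
  obtain ⟨k, hik, hkj, hck⟩ := exists_eq_zero_of_abs_sub_le_one
    (fun l => (yCount φ (Finset.Icc i l) : ℤ) - zCount φ (Finset.Icc i l)) (by omega) hstep
    (by omega) (by omega)
  have := yCount_Icc_eq_add φ i k j (by omega) (by omega)
  have := zCount_Icc_eq_add φ i k j (by omega) (by omega)
  have := yCount_add_zCount_Icc φ i k
  exact ⟨k, hik, by omega, by omega, by omega⟩

theorem exists_split {i j : ℕ} (hlen : i + 3 ≤ j) (heven : Even (j + 1 - i))
    (hside : (φ i).isLeft = (φ j).isLeft) :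
    ∃ k, i + 1 ≤ k ∧ k + 2 ≤ j ∧ (k - i) % 2 = 1 ∧
      min (yCount φ (Finset.Icc i k)) (zCount φ (Finset.Icc i k)) +
        min (yCount φ (Finset.Icc (k + 1) j)) (zCount φ (Finset.Icc (k + 1) j)) =
      min (yCount φ (Finset.Icc i j)) (zCount φ (Finset.Icc i j)) := by
  cases hi : (φ i).isLeft
  · obtain ⟨k, hk⟩ := exists_split_of_isLeft (Sum.swap ∘ φ) hlen heven
      (by simpa using hi) (by simpa [hside] using hi)
    simp only [yCount_swap, zCount_swap, min_comm (zCount φ _)] at hk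
    exact ⟨k, hk⟩
  · exact exists_split_of_isLeft φ hlen heven hi (hside ▸ hi)

end Splits

section Specialization

variable (D : Type*) [CommRing D]

def genericWeight (i k j : ℕ) : MvPolynomial (ℕ × ℕ × ℕ) D := X (i, k, j)

def killWeights (i j : ℕ) : MvPolynomial (ℕ × ℕ × ℕ) D →+* MvPolynomial (ℕ × ℕ × ℕ) D :=
  eval₂Hom C fun u => if u.1 = i ∧ u.2.2 = j then 0 else X u

def selectWeight (i k j : ℕ) :
    MvPolynomial (ℕ × ℕ × ℕ) D →+* Polynomial (MvPolynomial (ℕ × ℕ × ℕ) D) :=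
  eval₂Hom (Polynomial.C.comp C) fun u =>
    if u = (i, k, j) then Polynomial.X
    else if u.1 = i ∧ u.2.2 = j then 0 else Polynomial.C (X u)

variable {D}

theorem map_killWeights_ryPoly {fuel i j : ℕ} (hij : i ≤ j) :
    map (killWeights D i j) (ryPoly (genericWeight D) (fuel + 1) i j) =
      (1 + X i * X j) * ryPoly (genericWeight D) fuel (i + 1) (j - 1) := by
  rw [map_ryPoly, ryPoly_succ _ hij, ryPoly_congr (w' := genericWeight D)]
  · simp [killWeights, genericWeight]
  · intro a b c ha _
    simp only [killWeights, genericWeight, eval₂Hom_X']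
    rw [if_neg (by omega)]

theorem map_selectWeight_ryPoly {fuel i k j : ℕ} (hik : i + 1 ≤ k) (hkj : k + 2 ≤ j)
    (hodd : (k - i) % 2 = 1) :
    map (selectWeight D i k j) (ryPoly (genericWeight D) (fuel + 1) i j) =
      map Polynomial.C ((1 + X i * X j) * ryPoly (genericWeight D) fuel (i + 1) (j - 1))
        + C Polynomial.X * map Polynomial.C
          (ryPoly (genericWeight D) fuel i k * ryPoly (genericWeight D) fuel (k + 1) j) := by
  have hinner : ∀ {i' j'}, i ≤ i' → j' ≤ j → i < i' ∨ j' < j →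
      ryPoly (fun a b c => selectWeight D i k j (genericWeight D a b c)) fuel i' j' =
        map Polynomial.C (ryPoly (genericWeight D) fuel i' j') := by
    intro i' j' hi hj hij'
    rw [map_ryPoly]
    refine ryPoly_congr _ fun a b c ha hc => ?_
    simp only [selectWeight, genericWeight, eval₂Hom_X', Prod.mk.injEq]
    rw [if_neg (by omega), if_neg (by omega)]
  rw [map_ryPoly, ryPoly_succ _ (by omega), hinner (by omega) (by omega) (by omega),
    Finset.sum_eq_single_of_mem k (by simp only [Finset.mem_filter, Finset.mem_Icc]; omega)]
  · rw [hinner le_rfl (by omega) (by omega), hinner (by omega) le_rfl (by omega)]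
    simp [selectWeight, genericWeight, mul_assoc]
  · intro k' hk' hne
    simp [selectWeight, genericWeight, hne]

end Specialization

section Minors

variable {D : Type*} [CommRing D] [IsDomain D] {h : ℕ} (φ : ℕ → Fin h ⊕ Fin h)

theorem hasNonsingularMinor_of_isLeft_ne {fuel i j s : ℕ} (hinj : Set.InjOn φ (Set.Icc i j))
    (hij : i < j) (hside : (φ i).isLeft ≠ (φ j).isLeft)
    (hmid :
      (pdm (rename φ (ryPoly (genericWeight D) fuel (i + 1) (j - 1)))).HasNonsingularMinor s) :
    (pdm (rename φ (ryPoly (genericWeight D) (fuel + 1) i j))).HasNonsingularMinor (2 * s) := by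
  refine Matrix.HasNonsingularMinor.of_map (ψ := killWeights D i j) ?_
  rw [← pdm_map, map_rename, map_killWeights_ryPoly hij.le, map_mul]
  have hends : (1 + X i * X j : MvPolynomial ℕ (MvPolynomial (ℕ × ℕ × ℕ) D)) ∈
      supported _ {i, j} :=
    add_mem (one_mem _) (mul_mem (Algebra.subset_adjoin ⟨i, by simp, rfl⟩)
      (Algebra.subset_adjoin ⟨j, by simp, rfl⟩))
  have hdisj : Disjoint ({i, j} : Set ℕ) (Set.Icc (i + 1) (j - 1)) := by
    simp only [Set.disjoint_insert_left, Set.disjoint_singleton_left, Set.mem_Icc]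
    omega
  refine hasNonsingularMinor_pdm_mul (disjoint_vars_rename hends (ryPoly_mem_supported _ _ _ _)
    hdisj (hinj.mono ?_)) ?_ hmid
  · rintro x ((rfl | rfl) | ⟨hx₁, hx₂⟩) <;> simp only [Set.mem_Icc] at * <;> omega
  · simp only [map_add, map_one, map_mul, rename_X]
    rcases hφi : φ i with a | b <;> rcases hφj : φ j with a' | b' <;> simp [hφi, hφj] at hside
    · exact hasNonsingularMinor_pdm_one_add_X_mul_X a b'
    · rw [mul_comm]
      exact hasNonsingularMinor_pdm_one_add_X_mul_X a' b

theorem hasNonsingularMinor_of_split {fuel i k j s t : ℕ} (hinj : Set.InjOn φ (Set.Icc i j))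
    (hik : i + 1 ≤ k) (hkj : k + 2 ≤ j) (hodd : (k - i) % 2 = 1)
    (hleft : (pdm (rename φ (ryPoly (genericWeight D) fuel i k))).HasNonsingularMinor s)
    (hright : (pdm (rename φ (ryPoly (genericWeight D) fuel (k + 1) j))).HasNonsingularMinor t) :
    (pdm (rename φ (ryPoly (genericWeight D) (fuel + 1) i j))).HasNonsingularMinor (s * t) := by
  refine Matrix.HasNonsingularMinor.of_map (ψ := selectWeight D i k j) ?_
  rw [← pdm_map, map_rename, map_selectWeight_ryPoly hik hkj hodd, map_add, map_mul (rename φ),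
    rename_C, ← map_rename, ← map_rename, pdm_add, pdm_C_mul, pdm_map, pdm_map, add_comm]
  refine Matrix.HasNonsingularMinor.X_smul_map_C_add ?_ _
  rw [map_mul]
  refine hasNonsingularMinor_pdm_mul (disjoint_vars_rename (ryPoly_mem_supported _ _ _ _)
    (ryPoly_mem_supported _ _ _ _) ?_ (hinj.mono ?_)) hleft hright
  · exact Set.disjoint_left.mpr fun x hx hx' => by simp only [Set.mem_Icc] at hx hx'; omega
  · rintro x (⟨hx₁, hx₂⟩ | ⟨hx₁, hx₂⟩) <;> simp only [Set.mem_Icc] <;> omega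

theorem hasNonsingularMinor_pdm_rename_ryPoly (fuel i j : ℕ) (hinj : Set.InjOn φ (Set.Icc i j))
    (heven : Even (j + 1 - i)) (hfuel : j + 1 - i ≤ 2 * fuel) :
    (pdm (rename φ (ryPoly (genericWeight D) fuel i j))).HasNonsingularMinor
      (2 ^ min (yCount φ (Finset.Icc i j)) (zCount φ (Finset.Icc i j))) := by
  have hempty : ∀ {fuel i j}, j < i →
      (pdm (rename φ (ryPoly (genericWeight D) fuel i j))).HasNonsingularMinor
        (2 ^ min (yCount φ (Finset.Icc i j)) (zCount φ (Finset.Icc i j))) := fun hji => by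
    rw [ryPoly_of_lt _ hji, Finset.Icc_eq_empty (by omega)]
    exact hasNonsingularMinor_one_of_constantCoeff (by simp)
  induction fuel generalizing i j with
  | zero => exact hempty (by omega)
  | succ fuel ih =>
    by_cases hji : j < i
    · exact hempty hji
    have hij : i + 1 ≤ j := by obtain ⟨m, hm⟩ := heven; omega
    by_cases hside : (φ i).isLeft = (φ j).isLeft
    · rcases (show j = i + 1 ∨ i + 3 ≤ j by obtain ⟨m, hm⟩ := heven; omega) with rfl | hlen
      · rw [min_count_Icc_succ_self φ hside, pow_zero]
        exact hasNonsingularMinor_one_of_constantCoeff (by simp [ryPoly_succ_self])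
      obtain ⟨k, hik, hkj, hodd, hmin⟩ := exists_split φ hlen heven hside
      rw [← hmin, pow_add]
      exact hasNonsingularMinor_of_split φ hinj hik hkj hodd
        (ih i k (hinj.mono (Set.Icc_subset_Icc le_rfl (by omega))) ⟨(k + 1 - i) / 2, by omega⟩
          (by omega))
        (ih (k + 1) j (hinj.mono (Set.Icc_subset_Icc (by omega) le_rfl))
          ⟨(j - k) / 2, by obtain ⟨m, hm⟩ := heven; omega⟩ (by omega))
    · rw [min_count_Icc_of_isLeft_ne φ hij hside, pow_succ, mul_comm]
      exact hasNonsingularMinor_of_isLeft_ne φ hinj hij hside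
        (ih (i + 1) (j - 1) (hinj.mono (Set.Icc_subset_Icc (by omega) (by omega)))
          ⟨(j - i - 1) / 2, by obtain ⟨m, hm⟩ := heven; omega⟩ (by omega))

theorem two_pow_min_count_le_rank_pdm_razPoly (F : Type*) [Field F] {N : ℕ} (hN : Even N)
    (hinj : Set.InjOn φ (Set.Icc 1 N)) :
    2 ^ min (yCount φ (Finset.Icc 1 N)) (zCount φ (Finset.Icc 1 N)) ≤
      (pdm (rename φ (razPoly F N))).rank := by
  have hgeneric : razPoly F N = map (algebraMap _ (Gf F)) (ryPoly (genericWeight F) N 1 N) := by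
    rw [razPoly, RY_eq_ryPoly, map_ryPoly]
    rfl
  rw [hgeneric, ← map_rename, pdm_map]
  refine (Matrix.HasNonsingularMinor.map (IsFractionRing.injective _ _) ?_).le_rank
  exact hasNonsingularMinor_pdm_rename_ryPoly φ N 1 N hinj (by simpa using hN) (by omega)

end Minors

end RazYehudayoff

/-- The Raz–Yehudayoff polynomial has a full-rank partial derivative matrix
under every partition of its variables. -/
theorem razPoly_full_rank (F : Type) [Field F] (N h : ℕ) (hN : N = 2 * h)
    (φ : ℕ → Fin h ⊕ Fin h) (hφ : Set.BijOn φ (Set.Icc 1 N) Set.univ) :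
    (pdm (rename φ (razPoly F N))).rank = 2 ^ h := by
  have hsurj : Set.SurjOn φ (Finset.Icc 1 N : Set ℕ) Set.univ := by simpa using hφ.surjOn
  have hcount : h ≤ min (yCount φ (Finset.Icc 1 N)) (zCount φ (Finset.Icc 1 N)) :=
    le_min (le_yCount_of_surjOn φ hsurj) (le_zCount_of_surjOn φ hsurj)
  refine le_antisymm (by simpa using Matrix.rank_le_card_height (pdm (rename φ (razPoly F N)))) ?_
  calc 2 ^ h ≤ 2 ^ min (yCount φ (Finset.Icc 1 N)) (zCount φ (Finset.Icc 1 N)) :=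
        Nat.pow_le_pow_right two_pos hcount
    _ ≤ _ := RazYehudayoff.two_pow_min_count_le_rank_pdm_razPoly φ F ⟨h, by omega⟩ hφ.injOn

end
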